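/- The projection Π_Q onto the parity-constrained subspace W_Q is a contraction for the sup norm over the hypercube: ‖Π_Q p‖_∞ ≤ ‖p‖_∞, where ‖p‖_∞ = sup_{x∈{−1,1}^n} |p(x)|. -/

import Mathlib

open MvPolynomial

noncomputable section

/-- The sign vector in `{-1,1}^n` associated to a boolean vector. -/
def signv {n : ℕ} (x : Fin n → Bool) : Fin n → ℝ := fun i => if x i then 1 else -1

/-- The projection `Π_Q` onto the span of monomials `x^α` with `∑_{i ∈ I} α_i` odd
for every `I ∈ Q`. -/
def parityProj {n : ℕ} (Q : Finset (Finset (Fin n))) (p : MvPolynomial (Fin n) ℝ) :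
    MvPolynomial (Fin n) ℝ :=
  ∑ α ∈ p.support,
    if ∀ I ∈ Q, Odd (∑ i ∈ I, α i) then monomial α (p.coeff α) else 0

/-- The sup norm of a polynomial over the hypercube `{-1,1}^n`. -/
def supNorm {n : ℕ} (p : MvPolynomial (Fin n) ℝ) : ℝ :=
  sSup {c : ℝ | ∃ x : Fin n → Bool, c = |eval (signv x) p|}

/-! Flipping the signs of the coordinates in the blocks of a subfamily `S ⊆ Q` multiplies
a monomial `x^α` by `∏_{I ∈ S} (-1)^{α(I)}`, where `α(I) = ∑_{i ∈ I} α_i` (the blocks being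
disjoint). Summing over all `S ⊆ Q` with weight `(-1)^|S|` therefore multiplies `x^α` by
`∏_{I ∈ Q} (1 - (-1)^{α(I)})`, which is `2^|Q|` when every `α(I)` is odd and `0` otherwise.
So `2^|Q| Π_Q p(x)` is a signed sum of `2^|Q|` values of `p` on the hypercube, and the triangle
inequality gives the bound. -/

open Finset

theorem sum_powerset_neg_one_pow_card_mul_prod {ι R : Type*} [CommRing R] (Q : Finset ι)
    (a : ι → ℕ) :
    ∑ S ∈ Q.powerset, (-1 : R) ^ #S * ∏ I ∈ S, (-1) ^ a I =
      ∏ I ∈ Q, (1 - (-1) ^ a I) := by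
  simp_rw [sub_eq_add_neg, prod_one_add, prod_neg]

theorem prod_one_sub_neg_one_pow {ι R : Type*} [CommRing R] (Q : Finset ι) (a : ι → ℕ) :
    ∏ I ∈ Q, (1 - (-1 : R) ^ a I) = if ∀ I ∈ Q, Odd (a I) then 2 ^ #Q else 0 := by
  split_ifs with hodd
  · rw [prod_congr rfl fun I hI => by
      rw [(hodd I hI).neg_one_pow, sub_neg_eq_add, one_add_one_eq_two], prod_const]
  · push Not at hodd
    obtain ⟨I, hI, heven⟩ := hodd
    exact prod_eq_zero hI (by rw [(Nat.not_odd_iff_even.1 heven).neg_one_pow, sub_self])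

theorem prod_piecewise_neg_pow {σ R : Type*} [Fintype σ] [DecidableEq σ] [CommRing R]
    (U : Finset σ) (y : σ → R) (α : σ →₀ ℕ) :
    ∏ i, U.piecewise (-y) y i ^ α i = (-1) ^ (∑ i ∈ U, α i) * ∏ i, y i ^ α i := by
  have hfactor : ∀ i,
      U.piecewise (-y) y i ^ α i = (if i ∈ U then (-1) ^ α i else 1) * y i ^ α i := by
    intro i
    by_cases hi : i ∈ U
    · rw [piecewise_eq_of_mem _ _ _ hi, if_pos hi, Pi.neg_apply, neg_pow]
    · rw [piecewise_eq_of_notMem _ _ _ hi, if_neg hi, one_mul]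
  rw [prod_congr rfl fun i _ => hfactor i, prod_mul_distrib, prod_ite_mem, univ_inter,
    prod_pow_eq_pow_sum]

theorem sum_powerset_neg_one_pow_card_mul_neg_one_pow_sum_biUnion {σ R : Type*} [DecidableEq σ]
    [CommRing R] {Q : Finset (Finset σ)} (hQ : (Q : Set (Finset σ)).Pairwise Disjoint)
    (α : σ →₀ ℕ) :
    ∑ S ∈ Q.powerset, (-1 : R) ^ #S * (-1) ^ (∑ i ∈ S.biUnion id, α i) =
      if ∀ I ∈ Q, Odd (∑ i ∈ I, α i) then 2 ^ #Q else 0 := by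
  rw [← prod_one_sub_neg_one_pow, ← sum_powerset_neg_one_pow_card_mul_prod]
  refine sum_congr rfl fun S hS => ?_
  rw [sum_biUnion (t := id) (hQ.mono (coe_subset.2 (mem_powerset.1 hS))), prod_pow_eq_pow_sum]
  rfl

theorem two_pow_card_mul_eval_parityProj {n : ℕ} {Q : Finset (Finset (Fin n))}
    (hQ : (Q : Set (Finset (Fin n))).Pairwise Disjoint) (p : MvPolynomial (Fin n) ℝ)
    (y : Fin n → ℝ) :
    2 ^ #Q * eval y (parityProj Q p) =
      ∑ S ∈ Q.powerset, (-1) ^ #S * eval ((S.biUnion id).piecewise (-y) y) p := by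
  rw [parityProj, map_sum, mul_sum]
  simp only [eval_eq' _ p, prod_piecewise_neg_pow, mul_sum]
  rw [sum_comm]
  refine sum_congr rfl fun α _ => ?_
  have hregroup : ∀ S : Finset (Finset (Fin n)),
      (-1) ^ #S * (coeff α p * ((-1) ^ (∑ i ∈ S.biUnion id, α i) * ∏ i, y i ^ α i)) =
        (-1) ^ #S * (-1) ^ (∑ i ∈ S.biUnion id, α i) * (coeff α p * ∏ i, y i ^ α i) :=
    fun S => by ring
  rw [sum_congr rfl fun S _ => hregroup S, ← sum_mul,
    sum_powerset_neg_one_pow_card_mul_neg_one_pow_sum_biUnion hQ]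
  split_ifs
  · rw [eval_monomial, Finsupp.prod_pow]
  · simp

theorem signv_piecewise_not {n : ℕ} (U : Finset (Fin n)) (x : Fin n → Bool) :
    signv (U.piecewise (fun i => !x i) x) = U.piecewise (-signv x) (signv x) := by
  funext i
  by_cases hi : i ∈ U <;> by_cases hx : x i <;> simp [signv, hi, hx]

theorem abs_eval_signv_le_supNorm {n : ℕ} (p : MvPolynomial (Fin n) ℝ) (x : Fin n → Bool) :
    |eval (signv x) p| ≤ supNorm p :=
  le_csSup ((Set.finite_range fun x => |eval (signv x) p|).bddAbove.mono
    (by rintro _ ⟨x, rfl⟩; exact ⟨x, rfl⟩)) ⟨x, rfl⟩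

theorem supNorm_nonneg {n : ℕ} (p : MvPolynomial (Fin n) ℝ) : 0 ≤ supNorm p :=
  (abs_nonneg _).trans (abs_eval_signv_le_supNorm p fun _ => true)

theorem parityProj_supNorm_le (n : ℕ) (Q : Finset (Finset (Fin n)))
    (hQ : (Q : Set (Finset (Fin n))).Pairwise Disjoint)
    (p : MvPolynomial (Fin n) ℝ) :
    supNorm (parityProj Q p) ≤ supNorm p := by
  refine Real.sSup_le ?_ (supNorm_nonneg p)
  rintro _ ⟨x, rfl⟩
  have hpos : (0 : ℝ) < 2 ^ #Q := by positivity
  refine le_of_mul_le_mul_left ?_ hpos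
  calc 2 ^ #Q * |eval (signv x) (parityProj Q p)|
      = |∑ S ∈ Q.powerset,
          (-1) ^ #S * eval ((S.biUnion id).piecewise (-signv x) (signv x)) p| := by
        rw [← two_pow_card_mul_eval_parityProj hQ, abs_mul, abs_of_pos hpos]
    _ ≤ ∑ S ∈ Q.powerset, supNorm p := by
        refine (abs_sum_le_sum_abs _ _).trans (sum_le_sum fun S _ => ?_)
        rw [abs_mul, abs_pow, abs_neg, abs_one, one_pow, one_mul, ← signv_piecewise_not]
        exact abs_eval_signv_le_supNorm p _
    _ = 2 ^ #Q * supNorm p := by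
        rw [sum_const, card_powerset, nsmul_eq_mul, Nat.cast_pow, Nat.cast_ofNat]
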